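/- Let G be the group of n-tuples in {1,...,n-1}^n under componentwise addition modulo n-1, and H the cyclic subgroup generated by (1,...,1). Then every coset of H in G contains exactly one prime parking function of length n. -/

import Mathlib

/-- A parking function of length `n`. -/
def IsParkingFunction (n : ℕ) (π : Fin n → ℕ) : Prop :=
  (∀ i, 1 ≤ π i) ∧ ∃ σ : Equiv.Perm (Fin n),
    Monotone (π ∘ σ) ∧ ∀ i : Fin n, π (σ i) ≤ (i : ℕ) + 1

/-- A prime parking function of length `n`. -/
def IsPrimeParkingFunction (n : ℕ) (π : Fin n → ℕ) : Prop :=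
  IsParkingFunction n π ∧ ∀ j : ℕ, 1 ≤ j → j ≤ n - 1 →
    j + 1 ≤ (Finset.univ.filter (fun i : Fin n => π i ≤ j)).card

/-- Interpret an element of `ZMod (n-1)` as a preference in `{1, …, n-1}`
(the residue `0` corresponds to `n-1`). -/
def prefOfZMod (n : ℕ) (a : ZMod (n - 1)) : ℕ :=
  if a.val = 0 then n - 1 else a.val

/-!
This is the cycle lemma. For `h = g - 1` let `P x = ∑_{u < x} (#h⁻¹(u) - 1)`, reading the residues
mod `p = n - 1` along `ℕ`. Shifting the tuple by `-x`, the number of entries with preference `≤ j`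
is `j + P (x + j) - P x`, so the shift is prime iff `P x < P (x + j)` for `1 ≤ j ≤ p`. As `n = p + 1`
entries fall into `p` residues, `P (x + p) = P x + 1`; hence the last minimiser of `P` on `[0, p)`
has this property, and two such points less than a period apart would each lie strictly below
the other.
-/

open Finset

def IsStrictMinOnWindow (P : ℕ → ℤ) (p x : ℕ) : Prop :=
  ∀ u, 1 ≤ u → u ≤ p → P x < P (x + u)

theorem IsStrictMinOnWindow.le_of_lt_add {P : ℕ → ℤ} {p x z : ℕ}
    (hx : IsStrictMinOnWindow P p x) (hP : ∀ x, P (x + p) = P x + 1)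
    (hz : IsStrictMinOnWindow P p z) (hzx : z < x + p) : z ≤ x := by
  by_contra! hxz
  have hxz' := hx (z - x) (by omega) (by omega)
  have hzx' := hz (x + p - z) (by omega) (by omega)
  rw [Nat.add_sub_cancel' hxz.le] at hxz'
  rw [Nat.add_sub_cancel' hzx.le, hP] at hzx'
  omega

theorem existsUnique_isStrictMinOnWindow {P : ℕ → ℤ} {p : ℕ}
    (hP : ∀ x, P (x + p) = P x + 1) : ∃! x, x < p ∧ IsStrictMinOnWindow P p x := by
  have hp : (range p).Nonempty := nonempty_range_iff.2 fun h => by simpa [h] using hP 0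
  obtain ⟨y, hy, hy_min⟩ := exists_min_image (range p) P hp
  set M := {x ∈ range p | P x = P y}
  have hM : M.Nonempty := ⟨y, mem_filter.2 ⟨hy, rfl⟩⟩
  set x := M.max' hM
  have hxM : x ∈ M := max'_mem M hM
  simp only [M, mem_filter, mem_range] at hxM
  have hx : IsStrictMinOnWindow P p x := by
    intro u hu1 hup
    rcases lt_or_ge (x + u) p with hlt | hge
    · have hle := hy_min _ (mem_range.2 hlt)
      have hne : P (x + u) ≠ P y := fun heq => by
        have := le_max' M (x + u) (mem_filter.2 ⟨mem_range.2 hlt, heq⟩)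
        omega
      omega
    · obtain ⟨w, hw⟩ : ∃ w, x + u = w + p := ⟨x + u - p, by omega⟩
      have := hy_min w (mem_range.2 (by omega))
      rw [hw, hP]
      omega
  refine ⟨x, ⟨hxM.1, hx⟩, fun z ⟨hzp, hz⟩ => ?_⟩
  exact le_antisymm (hx.le_of_lt_add hP hz (by omega)) (hz.le_of_lt_add hP hx (by omega))

section CumulativeExcess

variable {ι : Type*} [Fintype ι] {p : ℕ} [NeZero p]

def cumulativeExcess (h : ι → ZMod p) (x : ℕ) : ℤ :=
  ∑ u ∈ range x, (#{i | h i = u} : ℤ) - x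

theorem card_val_sub_lt (h : ι → ZMod p) (x : ℕ) {t : ℕ} (ht : t ≤ p) :
    (#{i | (h i - x).val < t} : ℤ) = t + cumulativeExcess h (x + t) - cumulativeExcess h x := by
  have hfiber : #{i | (h i - x).val < t} = ∑ u ∈ range t, #{i | h i = ((x + u : ℕ) : ZMod p)} := by
    rw [card_eq_sum_card_fiberwise (f := fun i => (h i - x).val) (t := range t)
      (fun i hi => by simpa using hi)]
    refine sum_congr rfl fun u hu => ?_
    have hut : u < t := mem_range.1 hu
    have hu : u < p := hut.trans_le ht
    congr 1
    ext i
    simp only [mem_filter, mem_univ, true_and]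
    constructor
    · rintro ⟨-, hiu⟩
      rw [Nat.cast_add, ← sub_eq_iff_eq_add', ← hiu, ZMod.natCast_zmod_val]
    · intro hiu
      rw [hiu, Nat.cast_add, add_sub_cancel_left, ZMod.val_cast_of_lt hu]
      exact ⟨hut, rfl⟩
  simp only [cumulativeExcess, sum_range_add, hfiber]
  push_cast
  ring

theorem cumulativeExcess_add_period (h : ι → ZMod p) (x : ℕ) :
    cumulativeExcess h (x + p) = cumulativeExcess h x + (Fintype.card ι - p) := by
  have h := card_val_sub_lt h x le_rfl
  rw [filter_true_of_mem fun i _ => ZMod.val_lt _, card_univ] at h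
  linarith

end CumulativeExcess

theorem IsParkingFunction.of_le_card {n : ℕ} {π : Fin n → ℕ} (hpos : ∀ i, 1 ≤ π i)
    (hcard : ∀ j ≤ n, j ≤ #{i | π i ≤ j}) : IsParkingFunction n π := by
  refine ⟨hpos, Tuple.sort π, Tuple.monotone_sort π, fun i => ?_⟩
  by_contra! hlt
  have hle : #{k | π k ≤ i + 1} ≤ #(Iio i) :=
    card_le_card_of_injOn (Tuple.sort π).symm (fun k hk => ?_) (Tuple.sort π).symm.injective.injOn
  · have := hcard (i + 1) i.isLt
    rw [Fin.card_Iio] at hle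
    omega
  · simp only [coe_filter, Set.mem_ofPred_eq, mem_univ, true_and] at hk
    simp only [coe_Iio, Set.mem_Iio]
    by_contra! hik
    have := Tuple.monotone_sort π hik
    simp only [Function.comp_apply, Equiv.apply_symm_apply] at this
    omega

theorem isPrimeParkingFunction_iff {n : ℕ} {π : Fin n → ℕ} (hπ : ∀ i, π i ∈ Icc 1 (n - 1)) :
    IsPrimeParkingFunction n π ↔ ∀ j, 1 ≤ j → j ≤ n - 1 → j + 1 ≤ #{i | π i ≤ j} := by
  refine ⟨And.right, fun hcount => ⟨.of_le_card (fun i => (mem_Icc.1 (hπ i)).1) fun j hjn => ?_, hcount⟩⟩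
  obtain rfl | hj := eq_or_ne j 0
  · exact Nat.zero_le _
  by_cases hjn' : j ≤ n - 1
  · exact (hcount j (by omega) hjn').trans' (Nat.le_succ j)
  · rw [filter_true_of_mem fun i _ => (mem_Icc.1 (hπ i)).2.trans (by omega), card_univ,
      Fintype.card_fin]
    exact hjn

theorem prefOfZMod_add_one {p : ℕ} [NeZero p] (a : ZMod p) :
    prefOfZMod (p + 1) a = (a - 1).val + 1 := by
  have h := ZMod.cast_sub_one (R := ℤ) a
  simp only [ZMod.cast_eq_val] at h
  unfold prefOfZMod
  by_cases ha : a = 0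
  · rw [if_pos ha] at h
    rw [if_pos ((ZMod.val_eq_zero a).2 ha)]
    omega
  · rw [if_neg ha] at h
    rw [if_neg (ZMod.val_ne_zero a |>.2 ha)]
    omega

theorem isPrimeParkingFunction_prefOfZMod_sub_iff {p : ℕ} [NeZero p] (g : Fin (p + 1) → ZMod p)
    (x : ℕ) : IsPrimeParkingFunction (p + 1) (fun i => prefOfZMod (p + 1) (g i - x : ZMod p)) ↔
      IsStrictMinOnWindow (cumulativeExcess (g - 1)) p x := by
  have hbounds (i : Fin (p + 1)) : prefOfZMod (p + 1) (g i - (x : ZMod p)) ∈ Icc 1 (p + 1 - 1) := by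
    rw [prefOfZMod_add_one, mem_Icc]
    have := ZMod.val_lt (g i - (x : ZMod p) - 1)
    omega
  rw [isPrimeParkingFunction_iff hbounds, IsStrictMinOnWindow]
  simp only [prefOfZMod_add_one, Nat.add_sub_cancel]
  refine forall_congr' fun j => imp_congr_right fun _ => imp_congr_right fun hjp => ?_
  have hcard := card_val_sub_lt (g - 1) x hjp
  have hfilter : #{i | (g i - x - 1).val + 1 ≤ j} = #{i | ((g - 1) i - x).val < j} := by
    congr 1
    ext i
    simp only [mem_filter, mem_univ, true_and, Pi.sub_apply, Pi.one_apply, sub_right_comm]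
    omega
  rw [hfilter]
  omega

theorem ZMod.mem_zmultiples_const_one_iff {ι : Type*} {n : ℕ} (v : ι → ZMod n) :
    v ∈ AddSubgroup.zmultiples (fun _ => (1 : ZMod n)) ↔ ∃ a : ZMod n, v = fun _ => a := by
  rw [AddSubgroup.mem_zmultiples_iff]
  constructor
  · rintro ⟨k, rfl⟩
    exact ⟨k, by funext; simp⟩
  · rintro ⟨a, rfl⟩
    obtain ⟨k, rfl⟩ := ZMod.intCast_surjective a
    exact ⟨k, by funext; simp⟩

theorem existsUnique_sub_mem_zmultiples_isPrimeParkingFunction {p : ℕ} [NeZero p]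
    (g : Fin (p + 1) → ZMod p) :
    ∃! c : Fin (p + 1) → ZMod p,
      c - g ∈ AddSubgroup.zmultiples (fun _ => (1 : ZMod p)) ∧
      IsPrimeParkingFunction (p + 1) (fun i => prefOfZMod (p + 1) (c i)) := by
  have hperiod (x : ℕ) : cumulativeExcess (g - 1) (x + p) = cumulativeExcess (g - 1) x + 1 := by
    rw [cumulativeExcess_add_period, Fintype.card_fin]; push_cast; ring
  obtain ⟨x, ⟨-, hx⟩, hx_unique⟩ := existsUnique_isStrictMinOnWindow hperiod
  refine ⟨g - fun _ => (x : ZMod p), ⟨?_, (isPrimeParkingFunction_prefOfZMod_sub_iff g x).2 hx⟩, ?_⟩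
  · exact (ZMod.mem_zmultiples_const_one_iff _).2 ⟨-x, by funext; simp⟩
  · rintro c ⟨hc, hprime⟩
    obtain ⟨a, ha⟩ := (ZMod.mem_zmultiples_const_one_iff _).1 hc
    have hc : c = g - fun _ => (((-a).val : ℕ) : ZMod p) := by
      funext i; simpa [ZMod.natCast_zmod_val, sub_eq_iff_eq_add'] using congrFun ha i
    subst hc
    rw [hx_unique _ ⟨ZMod.val_lt _, (isPrimeParkingFunction_prefOfZMod_sub_iff g _).1 hprime⟩]

/-- Kalikow's circular symmetry: in the group `G = (ZMod (n-1))^n` under componentwise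
addition, with `H` the cyclic subgroup generated by `(1,…,1)`, every coset of `H`
contains exactly one prime parking function of length `n`. -/
theorem kalikow_coset_unique_primeParkingFunction (n : ℕ) (hn : 2 ≤ n)
    (g : Fin n → ZMod (n - 1)) :
    ∃! c : Fin n → ZMod (n - 1),
      c - g ∈ AddSubgroup.zmultiples (fun _ => (1 : ZMod (n - 1))) ∧
      IsPrimeParkingFunction n (fun i => prefOfZMod n (c i)) := by
  obtain ⟨p, rfl⟩ : ∃ p, n = p + 1 := ⟨n - 1, by omega⟩
  have : NeZero p := ⟨by omega⟩
  exact existsUnique_sub_mem_zmultiples_isPrimeParkingFunction g
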